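/- Let x, x', X, X', Y, Y' ∈ ℝ^{n+1}, let x₀ satisfy ⟨x₀,x₀⟩ = ε ∈ {−1,+1}, let μ ∈ {−1,+1}, and assume ⟨x,x⟩ = ⟨x',x'⟩ = μ, ⟨X,x⟩ = ⟨Y,x⟩ = 0, ⟨X',x'⟩ = ⟨Y',x'⟩ = 0, and s := ⟨x+x', x₀⟩ ≠ 0. For a pair (U,U') set q(U,U') := ⟨x,x₀⟩⟨U',x₀⟩ − ⟨x',x₀⟩⟨U,x₀⟩, D₁(U,U') := (2/s²)(εsU − ε⟨U+U',x₀⟩x + q(U,U')x₀) and D₂(U,U') := (2/s²)(εsU' − ε⟨U+U',x₀⟩x' − q(U,U')x₀). Then (s²/4)·(⟨D₁(X,X'), D₁(Y,Y')⟩ − ⟨D₂(X,X'), D₂(Y,Y')⟩) = ⟨X,Y⟩ − ⟨X',Y'⟩. -/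
import Mathlib


open scoped BigOperators

/-- The Minkowski bilinear form of signature `(n+1-p, p)` on `ℝ^(n+1)`. -/
noncomputable def mink (n p : ℕ) (x y : Fin (n + 1) → ℝ) : ℝ :=
  ∑ i : Fin (n + 1), (if (i : ℕ) < p then (-1 : ℝ) else 1) * x i * y i

/-- `q(U,U') = ⟨x,x₀⟩⟨U',x₀⟩ − ⟨x',x₀⟩⟨U,x₀⟩`. -/
noncomputable def pogoQ (n p : ℕ) (x₀ x x' U U' : Fin (n + 1) → ℝ) : ℝ :=
  mink n p x x₀ * mink n p U' x₀ - mink n p x' x₀ * mink n p U x₀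

/-- `D₁(U,U') = (2/s²)(εsU − ε⟨U+U',x₀⟩x + q(U,U')x₀)` with `s = ⟨x+x',x₀⟩`. -/
noncomputable def pogoD1 (n p : ℕ) (ε : ℝ) (x₀ x x' U U' : Fin (n + 1) → ℝ) :
    Fin (n + 1) → ℝ :=
  (2 / (mink n p (x + x') x₀) ^ 2) •
    ((ε * mink n p (x + x') x₀) • U - (ε * mink n p (U + U') x₀) • x
      + pogoQ n p x₀ x x' U U' • x₀)

/-- `D₂(U,U') = (2/s²)(εsU' − ε⟨U+U',x₀⟩x' − q(U,U')x₀)` with `s = ⟨x+x',x₀⟩`. -/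
noncomputable def pogoD2 (n p : ℕ) (ε : ℝ) (x₀ x x' U U' : Fin (n + 1) → ℝ) :
    Fin (n + 1) → ℝ :=
  (2 / (mink n p (x + x') x₀) ^ 2) •
    ((ε * mink n p (x + x') x₀) • U' - (ε * mink n p (U + U') x₀) • x'
      - pogoQ n p x₀ x x' U U' • x₀)

lemma mink_comm (n p : ℕ) (x y : Fin (n + 1) → ℝ) : mink n p x y = mink n p y x := by
  unfold mink; apply Finset.sum_congr rfl; intros; ring

lemma mink_add_left (n p : ℕ) (x y z : Fin (n + 1) → ℝ) :
    mink n p (x + y) z = mink n p x z + mink n p y z := by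
  unfold mink; rw [← Finset.sum_add_distrib]
  apply Finset.sum_congr rfl; intros; simp only [Pi.add_apply]; split <;> ring

lemma mink_sub_left (n p : ℕ) (x y z : Fin (n + 1) → ℝ) :
    mink n p (x - y) z = mink n p x z - mink n p y z := by
  unfold mink; rw [← Finset.sum_sub_distrib]
  apply Finset.sum_congr rfl; intros; simp only [Pi.sub_apply]; split <;> ring

lemma mink_smul_left (n p : ℕ) (c : ℝ) (x z : Fin (n + 1) → ℝ) :
    mink n p (c • x) z = c * mink n p x z := by
  unfold mink; rw [Finset.mul_sum]
  apply Finset.sum_congr rfl; intros; simp only [Pi.smul_apply, smul_eq_mul]; split <;> ring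

lemma mink_add_right (n p : ℕ) (x y z : Fin (n + 1) → ℝ) :
    mink n p z (x + y) = mink n p z x + mink n p z y := by
  rw [mink_comm, mink_add_left, mink_comm n p x z, mink_comm n p y z]

lemma mink_sub_right (n p : ℕ) (x y z : Fin (n + 1) → ℝ) :
    mink n p z (x - y) = mink n p z x - mink n p z y := by
  rw [mink_comm, mink_sub_left, mink_comm n p x z, mink_comm n p y z]

lemma mink_smul_right (n p : ℕ) (c : ℝ) (x z : Fin (n + 1) → ℝ) :
    mink n p z (c • x) = c * mink n p z x := by
  rw [mink_comm, mink_smul_left, mink_comm n p x z]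

/-- Polarized form of property 1 of the global Pogorelov transformation:
`(s²/4)(⟨D₁(X,X'),D₁(Y,Y')⟩ − ⟨D₂(X,X'),D₂(Y,Y')⟩) = ⟨X,Y⟩ − ⟨X',Y'⟩`. -/
theorem pogorelov_differential_polarized
    (n p : ℕ) (hn : 1 ≤ n) (hp : p ≤ n + 1) (ε μ : ℝ)
    (hε : ε = 1 ∨ ε = -1) (hμ : μ = 1 ∨ μ = -1)
    (x₀ x x' X X' Y Y' : Fin (n + 1) → ℝ)
    (hx₀ : mink n p x₀ x₀ = ε)
    (hx : mink n p x x = μ) (hx' : mink n p x' x' = μ)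
    (hXx : mink n p X x = 0) (hYx : mink n p Y x = 0)
    (hX'x' : mink n p X' x' = 0) (hY'x' : mink n p Y' x' = 0)
    (hs0 : mink n p (x + x') x₀ ≠ 0) :
    (mink n p (x + x') x₀) ^ 2 / 4 *
        (mink n p (pogoD1 n p ε x₀ x x' X X') (pogoD1 n p ε x₀ x x' Y Y')
          - mink n p (pogoD2 n p ε x₀ x x' X X') (pogoD2 n p ε x₀ x x' Y Y'))
      = mink n p X Y - mink n p X' Y' := by
  have hε2 : ε * ε = 1 := by rcases hε with h | h <;> simp [h]
  simp only [pogoD1, pogoD2, pogoQ, mink_add_left, mink_add_right, mink_sub_left,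
    mink_sub_right, mink_smul_left, mink_smul_right] at *
  rw [mink_comm n p x Y, mink_comm n p x' Y', mink_comm n p x₀ Y, mink_comm n p x₀ Y',
    mink_comm n p x₀ x, mink_comm n p x₀ x'] at *
  rw [hx₀, hXx, hYx, hX'x', hY'x', hx, hx']
  rcases hε with h | h <;> subst h <;> (field_simp; ring)
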